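/- Acyclicity is preserved by the priority map update: if D is acyclic, ā' is safe, eaters are sinks in D' and hungry vertices dominate thinking neighbours in D', where D' = d_H(D, ā'), then D' is acyclic. -/
import Mathlib


inductive Act : Type
  | t | h | e
deriving DecidableEq, Repr

def switch : Act → Act
  | Act.t => Act.h
  | Act.h => Act.e
  | Act.e => Act.t

def fP (a : Act) (b : Bool) : Act := if b then switch a else a

inductive Cmd : Type
  | pass | force (b : Bool)
deriving DecidableEq

def fS (a : Act) (b : Bool) : Cmd → Act
  | Cmd.pass => fP a b
  | Cmd.force b' => fP a b'

/-- The updated priority relation `dH D a`: edge `j ↦ k` of `D` is reversed when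
`a j = e`, or when `a j = t` and `a k = h`; otherwise kept. -/
def dH {V : Type*} (D : V → V → Prop) (a : V → Act) : V → V → Prop :=
  fun j k =>
    (D j k ∧ ¬ (a j = Act.e ∨ (a j = Act.t ∧ a k = Act.h))) ∨
    (D k j ∧ (a k = Act.e ∨ (a k = Act.t ∧ a j = Act.h)))

/-- `D` is a priority map for `E`: it orients each edge of `E` exactly one way. -/
def IsPriorityMap {V : Type*} (E D : V → V → Prop) : Prop :=
  (∀ j k, D j k → E j k) ∧ (∀ j k, E j k → (D j k ↔ ¬ D k j))

def topD {V : Type*} (E D : V → V → Prop) (j : V) : Prop := ∀ k, E j k → D j k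

def ready {V : Type*} (E D : V → V → Prop) (a : V → Act) (j : V) : Prop :=
  a j = Act.h ∧ topD E D j ∧ ∀ k, E j k → a k ≠ Act.e

open scoped Classical in
noncomputable def gH {V : Type*} (E D : V → V → Prop) (a : V → Act) (j : V) : Cmd :=
  if a j = Act.t ∨ a j = Act.e then Cmd.pass
  else if ready E D a j then Cmd.force true else Cmd.force false

/-- One step of the polled dynamics of the philosophers under the hub controller. -/
noncomputable def nextA {V : Type*} (E D : V → V → Prop) (a : V → Act) (b : V → Bool) :
    V → Act :=
  fun j => fS (a j) (b j) (gH E D a j)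

def safe {V : Type*} (E : V → V → Prop) (a : V → Act) : Prop :=
  ∀ j k, E j k → ¬ (a j = Act.e ∧ a k = Act.e)

def Acyclic {V : Type*} (D : V → V → Prop) : Prop :=
  ∀ j, ¬ Relation.TransGen D j j

/-- Rank of an action: hungry < thinking < eating. -/
def rnk : Act → ℕ
  | Act.h => 0
  | Act.t => 1
  | Act.e => 2

theorem acyclicity_preserved {V : Type*} (E D : V → V → Prop)
    (hE_irr : ∀ j, ¬ E j j) (hE_symm : ∀ j k, E j k → E k j)
    (hD : IsPriorityMap E D) (a' : V → Act)
    (hacyc : Acyclic D)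
    (hsafe : safe E a')
    (hsinks : ∀ j k, E j k → a' k = Act.e → dH D a' j k)
    (hht : ∀ j k, E j k → a' j = Act.h → a' k = Act.t → dH D a' j k) :
    Acyclic (dH D a') := by
  -- D' orients each edge at most one way
  have hanti : ∀ j k, dH D a' j k → ¬ dH D a' k j := by
    intro j k h1 h2
    rcases h1 with ⟨hd, hc⟩ | ⟨hd, hc⟩ <;>
      rcases h2 with ⟨hd', hc'⟩ | ⟨hd', hc'⟩
    · exact ((hD.2 j k (hD.1 j k hd)).mp hd) hd'
    · exact hc hc'
    · exact hc' hc
    · exact ((hD.2 k j (hD.1 k j hd)).mp hd) hd'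
  -- D' edges are edges of E
  have hedge : ∀ j k, dH D a' j k → E j k := by
    intro j k h1
    rcases h1 with ⟨hd, _⟩ | ⟨hd, _⟩
    · exact hD.1 j k hd
    · exact hE_symm k j (hD.1 k j hd)
  -- key local lemma: along a D' edge, rank strictly increases or stays equal with a D edge
  have hkey : ∀ x y, dH D a' x y →
      rnk (a' x) < rnk (a' y) ∨ (a' x = a' y ∧ D x y) := by
    intro x y hxy
    have hExy := hedge x y hxy
    cases hax : a' x <;> cases hay : a' y
    -- x = t
    · -- t t
      rcases hxy with ⟨hd, _⟩ | ⟨_, hc⟩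
      · exact Or.inr ⟨rfl, hd⟩
      · simp [hax, hay] at hc
    · -- t h : impossible
      exact absurd (hht y x (hE_symm x y hExy) hay hax) (hanti x y hxy)
    · -- t e
      left; simp [hax, hay, rnk]
    -- x = h
    · -- h t
      left; simp [hax, hay, rnk]
    · -- h h
      rcases hxy with ⟨hd, _⟩ | ⟨_, hc⟩
      · exact Or.inr ⟨rfl, hd⟩
      · simp [hax, hay] at hc
    · -- h e
      left; simp [hax, hay, rnk]
    -- x = e : impossible, x would have an incoming edge both ways
    · exact absurd (hsinks y x (hE_symm x y hExy) hax) (hanti x y hxy)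
    · exact absurd (hsinks y x (hE_symm x y hExy) hax) (hanti x y hxy)
    · exact absurd (hsinks y x (hE_symm x y hExy) hax) (hanti x y hxy)
  -- promote to transitive closure
  have hmono : ∀ x y, Relation.TransGen (dH D a') x y →
      rnk (a' x) < rnk (a' y) ∨ (a' x = a' y ∧ Relation.TransGen D x y) := by
    intro x y h
    induction h with
    | single h =>
      rcases hkey _ _ h with h' | ⟨he, hd⟩
      · exact Or.inl h'
      · exact Or.inr ⟨he, Relation.TransGen.single hd⟩
    | tail hxb hby ih =>
      rcases hkey _ _ hby with h' | ⟨he, hd⟩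
      · rcases ih with h'' | ⟨he'', _⟩
        · exact Or.inl (h''.trans h')
        · exact Or.inl (he'' ▸ h')
      · rcases ih with h'' | ⟨he'', htg⟩
        · exact Or.inl (he ▸ h'')
        · exact Or.inr ⟨he''.trans he, htg.tail hd⟩
  intro j h
  rcases hmono j j h with h' | ⟨_, htg⟩
  · exact lt_irrefl _ h'
  · exact hacyc j htg
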